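/- arXiv:2305.04281 — 3 statements merged into one kernel-verified Lean document; each statement's English description precedes it below -/
import Mathlib

section
/- With the MCF construction (K^t from a sequence of partitions P^{t_1}, ..., P^{t_M} of a finite set X), the number of connected components of K^t equals the number of clusters #P^t if and only if the partition P^t is non-fractured, i.e., every earlier partition P^s (s ≤ t) refines P^t. -/
open Finset

/-! The points of a cluster of `P m` are pairwise adjacent in `K^{t m}`, so every connected
component is a union of clusters of `P m` and there are at most `#(P m).parts` components. Equality
holds exactly when no edge of `K^{t m}` joins two different clusters of `P m`, that is, when every
cluster of every `P s` with `t s ≤ t m` lies inside a cluster of `P m`. -/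

/-- The 1-skeleton graph of the MCF complex `K^T`: two distinct points are adjacent
iff they share a cluster in some partition of the sequence with scale `≤ T`. -/
def mcfGraph {X : Type*} [Fintype X] [DecidableEq X] {M : ℕ}
    (P : Fin M → Finpartition (univ : Finset X)) (t : Fin M → ℝ) (T : ℝ) :
    SimpleGraph X where
  Adj x y := x ≠ y ∧ ∃ s, t s ≤ T ∧ ∃ C ∈ (P s).parts, x ∈ C ∧ y ∈ C
  symm := by
    constructor
    rintro x y ⟨hxy, s, hs, C, hC, hx, hy⟩
    exact ⟨hxy.symm, s, hs, C, hC, hy, hx⟩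
  loopless := ⟨fun x h => h.1 rfl⟩

theorem Finset.card_image_eq_card_image_iff {α β γ : Type*} [DecidableEq β] [DecidableEq γ]
    {s : Finset α} {f : α → β} {g : α → γ} (hfg : ∀ x ∈ s, ∀ y ∈ s, f x = f y → g x = g y) :
    #(s.image g) = #(s.image f) ↔ ∀ x ∈ s, ∀ y ∈ s, g x = g y → f x = f y := by
  -- both sides are compared with the number of values of `x ↦ (f x, g x)`
  set fg : α → β × γ := fun x => (f x, g x)
  have hfst : #(s.image f) = #(s.image fg) := by
    rw [show s.image f = (s.image fg).image Prod.fst by rw [image_image]; rfl]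
    refine card_image_of_injOn ?_
    simp only [coe_image, Set.InjOn, Set.forall_mem_image]
    intro x hx y hy hxy
    exact Prod.ext hxy (hfg x hx y hy hxy)
  rw [hfst, show s.image g = (s.image fg).image Prod.snd by rw [image_image]; rfl, card_image_iff]
  simp only [coe_image, Set.InjOn, Set.forall_mem_image, fg, Prod.ext_iff]
  exact forall₂_congr fun x _ => forall₂_congr fun y _ =>
    imp_congr_right fun hg => and_iff_left hg

theorem Finpartition.image_part {α : Type*} [DecidableEq α] {s : Finset α}
    (Q : Finpartition s) : s.image Q.part = Q.parts := by
  ext C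
  simp only [mem_image]
  exact ⟨fun ⟨x, hx, hxC⟩ => hxC ▸ Q.part_mem.2 hx, fun hC => Q.part_surjOn hC⟩

theorem Finpartition.le_iff_forall_part_eq {α : Type*} [DecidableEq α] {s : Finset α}
    {R Q : Finpartition s} :
    R ≤ Q ↔ ∀ C ∈ R.parts, ∀ x ∈ C, ∀ y ∈ C, Q.part x = Q.part y := by
  constructor
  · intro hRQ C hC x hx y hy
    obtain ⟨D, hD, hCD⟩ := hRQ hC
    rw [Q.part_eq_of_mem hD (hCD hx), Q.part_eq_of_mem hD (hCD hy)]
  · intro h C hC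
    obtain ⟨x, hx⟩ := R.nonempty_of_mem_parts hC
    have hxs : x ∈ s := R.le hC hx
    refine ⟨Q.part x, Q.part_mem.2 hxs, fun y hy => ?_⟩
    rw [h C hC x hx y hy]
    exact Q.mem_part (R.le hC hy)

namespace SimpleGraph

variable {V : Type*} {G : SimpleGraph V}

theorem Reachable.apply_eq_of_forall_adj {β : Type*} {f : V → β}
    (hf : ∀ x y, G.Adj x y → f x = f y) {u v : V} (h : G.Reachable u v) : f u = f v := by
  rw [reachable_iff_reflTransGen] at h
  induction h with
  | refl => rfl
  | tail _ hadj ih => exact ih.trans (hf _ _ hadj)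

theorem card_connectedComponent_eq_card_parts_iff [Fintype V] [DecidableEq V]
    {Q : Finpartition (univ : Finset V)} (hQ : ∀ x y, Q.part x = Q.part y → G.Reachable x y) :
    Nat.card G.ConnectedComponent = #Q.parts ↔ ∀ x y, G.Adj x y → Q.part x = Q.part y := by
  classical
  have hcard : Nat.card G.ConnectedComponent = #(univ.image G.connectedComponentMk) := by
    rw [image_univ_of_surjective (f := G.connectedComponentMk) Quot.mk_surjective, card_univ,
      Nat.card_eq_fintype_card]
  rw [hcard, ← Q.image_part,
    card_image_eq_card_image_iff fun x _ y _ hxy => ConnectedComponent.sound (hQ x y hxy)]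
  simp only [mem_univ, true_imp_iff, ConnectedComponent.eq]
  exact ⟨fun h x y hadj => h x y hadj.reachable, fun h x y => Reachable.apply_eq_of_forall_adj h⟩

end SimpleGraph

section mcfGraph

variable {X : Type*} [Fintype X] [DecidableEq X] {M : ℕ}
  (P : Fin M → Finpartition (univ : Finset X)) (t : Fin M → ℝ)

theorem mcfGraph_reachable_of_part_eq (m : Fin M) {x y : X} (hxy : (P m).part x = (P m).part y) :
    (mcfGraph P t (t m)).Reachable x y := by
  rcases eq_or_ne x y with rfl | hne
  · rfl
  · have hx : x ∈ (P m).part y := hxy ▸ (P m).mem_part (mem_univ x)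
    exact SimpleGraph.Adj.reachable
      ⟨hne, m, le_rfl, (P m).part y, (P m).part_mem.2 (mem_univ y), hx, (P m).mem_part (mem_univ y)⟩

theorem mcfGraph_forall_adj_part_eq_iff (T : ℝ) (Q : Finpartition (univ : Finset X)) :
    (∀ x y, (mcfGraph P t T).Adj x y → Q.part x = Q.part y) ↔ ∀ s, t s ≤ T → P s ≤ Q := by
  simp only [Finpartition.le_iff_forall_part_eq]
  constructor
  · intro h s hs C hC x hx y hy
    rcases eq_or_ne x y with rfl | hne
    · rfl
    · exact h x y ⟨hne, s, hs, C, hC, hx, hy⟩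
  · rintro h x y ⟨-, s, hs, C, hC, hx, hy⟩
    exact h s hs C hC x hx y hy

end mcfGraph

theorem mcf_components_eq_clusters_iff_nonfractured_general
    {X : Type*} [Fintype X] [DecidableEq X] {M : ℕ}
    (P : Fin M → Finpartition (univ : Finset X)) (t : Fin M → ℝ)
    (m : Fin M) :
    Nat.card (mcfGraph P t (t m)).ConnectedComponent = (P m).parts.card ↔
      ∀ s : Fin M, t s ≤ t m → P s ≤ P m := by
  rw [SimpleGraph.card_connectedComponent_eq_card_parts_iff
    fun x y => mcfGraph_reachable_of_part_eq P t m, mcfGraph_forall_adj_part_eq_iff]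

/-- The number of connected components of the MCF complex at a scale `t m` of the
sequence equals the number of clusters of `P m` iff `P m` is non-fractured,
i.e. every partition at an earlier (or equal) scale refines `P m`. -/
theorem mcf_components_eq_clusters_iff_nonfractured
    {X : Type*} [Fintype X] [DecidableEq X] {M : ℕ}
    (P : Fin M → Finpartition (univ : Finset X)) (t : Fin M → ℝ) (ht : StrictMono t)
    (m : Fin M) :
    Nat.card (mcfGraph P t (t m)).ConnectedComponent = (P m).parts.card ↔
      ∀ s : Fin M, t s ≤ t m → P s ≤ P m :=
  mcf_components_eq_clusters_iff_nonfractured_general P t m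
end

section
/- If the sequence of partitions (P^{t_m})_{m ≤ M} of a finite set X is strictly hierarchical (each partition refines the next), then for every k ≥ 1 and every t, every k-cycle in the simplicial chain complex of the MCF complex K^t over Z/2 is a boundary, i.e., H_k(K^t; Z/2) = 0 for all k ≥ 1. -/
open Finset

variable {X : Type*} [Fintype X] [DecidableEq X]

/-- The MCF complex at scale `T`. -/
def mcfComplex {M : ℕ} (P : Fin M → Finpartition (univ : Finset X))
    (t : Fin M → ℝ) (T : ℝ) : Set (Finset X) :=
  {σ | σ.Nonempty ∧ ∃ s, t s ≤ T ∧ ∃ C ∈ (P s).parts, σ ⊆ C}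

/-- The simplicial boundary operator over `ℤ/2` on chains, viewed as functions from
finite subsets of `X` to `ℤ/2`: `(∂c)(τ) = ∑_{x ∉ τ} c(τ ∪ {x})`. -/
def mod2Boundary (c : Finset X → ZMod 2) : Finset X → ZMod 2 :=
  fun τ => ∑ x ∈ τᶜ, c (insert x τ)

/-- A `k`-chain of the complex `K`: supported on simplices of `K` with `k+1` vertices. -/
def IsSimplicialChain (K : Set (Finset X)) (k : ℕ) (c : Finset X → ZMod 2) : Prop :=
  ∀ σ, c σ ≠ 0 → σ ∈ K ∧ σ.card = k + 1

/-- If the sequence of partitions is strictly hierarchical, then every `k`-cycle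
(`k ≥ 1`) of the MCF complex over `ℤ/2` is a boundary, i.e. `H_k(K^T; ℤ/2) = 0`. -/
theorem mcf_hierarchical_higher_homology_trivial {M : ℕ}
    (P : Fin M → Finpartition (univ : Finset X)) (t : Fin M → ℝ) (ht : StrictMono t)
    (hhier : ∀ i j : Fin M, i ≤ j → P i ≤ P j)
    (k : ℕ) (hk : 1 ≤ k) (T : ℝ) (c : Finset X → ZMod 2)
    (hc : IsSimplicialChain (mcfComplex P t T) k c) (hcycle : mod2Boundary c = 0) :
    ∃ b : Finset X → ZMod 2,
      IsSimplicialChain (mcfComplex P t T) (k + 1) b ∧ mod2Boundary b = c := by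
  classical
  have hflip : ∀ a x : ZMod 2, a + x = 0 → x = a := by decide
  by_cases hex : ∃ s : Fin M, t s ≤ T
  · obtain ⟨s0, hs0⟩ := hex
    have hSne : (univ.filter (fun s => t s ≤ T)).Nonempty := ⟨s0, by simp [hs0]⟩
    set sm := (univ.filter (fun s : Fin M => t s ≤ T)).max' hSne with hsm
    have hsT : t sm ≤ T := by
      have := Finset.max'_mem _ hSne
      simp only [Finset.mem_filter] at this
      exact this.2
    have hmaxle : ∀ s, t s ≤ T → s ≤ sm := fun s h => Finset.le_max' _ s (by simp [h])
    have hmemK : ∀ σ : Finset X,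
        σ ∈ mcfComplex P t T ↔ σ.Nonempty ∧ ∃ C ∈ (P sm).parts, σ ⊆ C := by
      intro σ
      constructor
      · rintro ⟨hne, s, hts, C, hC, hsub⟩
        obtain ⟨D, hD, hCD⟩ := hhier s sm (hmaxle s hts) hC
        exact ⟨hne, D, hD, hsub.trans hCD⟩
      · rintro ⟨hne, C, hC, hsub⟩
        exact ⟨hne, sm, hsT, C, hC, hsub⟩
    have csupp : ∀ σ, c σ ≠ 0 → σ.card = k + 1 ∧ ∃ C ∈ (P sm).parts, σ ⊆ C := by
      intro σ h
      obtain ⟨hK, hcard⟩ := hc σ h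
      exact ⟨hcard, ((hmemK σ).mp hK).2⟩
    have hcyc : ∀ τ : Finset X, ∑ x ∈ τᶜ, c (insert x τ) = 0 := fun τ => congrFun hcycle τ
    have uniqC : ∀ {C D : Finset X}, C ∈ (P sm).parts → D ∈ (P sm).parts →
        ∀ {σ : Finset X}, σ.Nonempty → σ ⊆ C → σ ⊆ D → C = D := by
      rintro C D hC hD σ ⟨z, hz⟩ h1 h2
      exact (P sm).eq_of_mem_parts hC hD (h1 hz) (h2 hz)
    choose v hv using fun C (hC : C ∈ (P sm).parts) => (P sm).nonempty_of_mem_parts hC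
    refine ⟨fun σ => ∑ x ∈ σ,
      if (∃ C, ∃ h : C ∈ (P sm).parts, σ ⊆ C ∧ x = v C h) then c (σ.erase x) else 0, ?_, ?_⟩
    · -- b is a (k+1)-chain
      intro σ hb
      obtain ⟨x, hxσ, hterm⟩ := Finset.exists_ne_zero_of_sum_ne_zero hb
      by_cases hcond : (∃ C, ∃ h : C ∈ (P sm).parts, σ ⊆ C ∧ x = v C h)
      · rw [if_pos hcond] at hterm
        obtain ⟨C, hC, hσC, -⟩ := hcond
        have h1 := (hc _ hterm).2
        have he := Finset.card_erase_of_mem hxσ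
        have hpos : 0 < σ.card := Finset.card_pos.mpr ⟨x, hxσ⟩
        have hcard : σ.card = k + 1 + 1 := by omega
        exact ⟨(hmemK σ).mpr ⟨⟨x, hxσ⟩, C, hC, hσC⟩, hcard⟩
      · rw [if_neg hcond] at hterm
        exact absurd rfl hterm
    · -- boundary of b is c
      funext τ
      show (∑ y ∈ τᶜ, ∑ x ∈ insert y τ,
        if (∃ C, ∃ h : C ∈ (P sm).parts, insert y τ ⊆ C ∧ x = v C h)
          then c ((insert y τ).erase x) else 0) = c τ
      by_cases hgood : ∃ C ∈ (P sm).parts, τ ⊆ C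
      · obtain ⟨C, hC, hτC⟩ := hgood
        by_cases hcard : τ.card = k + 1
        · -- main case
          have hτne : τ.Nonempty := Finset.card_pos.mp (by omega)
          have key : ∀ y ∈ τᶜ, (∑ x ∈ insert y τ,
              if (∃ D, ∃ h : D ∈ (P sm).parts, insert y τ ⊆ D ∧ x = v D h)
                then c ((insert y τ).erase x) else 0) =
              if y ∈ C then (if v C hC ∈ insert y τ
                then c ((insert y τ).erase (v C hC)) else 0) else 0 := by
            intro y hy
            by_cases hyC : y ∈ C
            · rw [if_pos hyC]
              have hsub : insert y τ ⊆ C := Finset.insert_subset hyC hτC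
              have hcondiff : ∀ x : X,
                  (∃ D, ∃ h : D ∈ (P sm).parts, insert y τ ⊆ D ∧ x = v D h) ↔ x = v C hC := by
                intro x
                constructor
                · rintro ⟨D, hD, hsubD, rfl⟩
                  have hDC : D = C :=
                    uniqC hD hC hτne ((Finset.subset_insert y τ).trans hsubD) hτC
                  subst hDC
                  rfl
                · rintro rfl
                  exact ⟨C, hC, hsub, rfl⟩
              calc (∑ x ∈ insert y τ,
                  if (∃ D, ∃ h : D ∈ (P sm).parts, insert y τ ⊆ D ∧ x = v D h)
                    then c ((insert y τ).erase x) else 0)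
                  = ∑ x ∈ insert y τ, if x = v C hC then c ((insert y τ).erase x) else 0 :=
                    Finset.sum_congr rfl (fun x _ => by simp only [hcondiff x])
                _ = if v C hC ∈ insert y τ then c ((insert y τ).erase (v C hC)) else 0 :=
                    Finset.sum_ite_eq' _ _ _
            · rw [if_neg hyC]
              refine Finset.sum_eq_zero fun x _ => ?_
              rw [if_neg]
              rintro ⟨D, hD, hsubD, -⟩
              have hDC : D = C :=
                uniqC hD hC hτne ((Finset.subset_insert y τ).trans hsubD) hτC
              subst hDC
              exact hyC (hsubD (Finset.mem_insert_self y τ))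
          rw [Finset.sum_congr rfl key]
          by_cases hwτ : v C hC ∈ τ
          · -- apex already in τ
            have step : ∀ y ∈ τᶜ,
                (if y ∈ C then (if v C hC ∈ insert y τ
                  then c ((insert y τ).erase (v C hC)) else 0) else 0) =
                c (insert y (τ.erase (v C hC))) := by
              intro y hy
              have hyτ : y ∉ τ := by simpa using hy
              by_cases hyC : y ∈ C
              · rw [if_pos hyC, if_pos (Finset.mem_insert_of_mem hwτ),
                  Finset.erase_insert_of_ne (fun h => hyτ (by rw [← h] at hwτ; exact hwτ))]
              · rw [if_neg hyC]
                symm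
                by_contra h
                obtain ⟨-, D, hD, hsubD⟩ := csupp _ h
                have hkne : (τ.erase (v C hC)).Nonempty := by
                  refine Finset.card_pos.mp ?_
                  rw [Finset.card_erase_of_mem hwτ]
                  omega
                obtain ⟨z, hz⟩ := hkne
                have hDC : D = C := (P sm).eq_of_mem_parts hD hC
                  (hsubD (Finset.mem_insert_of_mem hz)) (hτC (Finset.mem_of_mem_erase hz))
                subst hDC
                exact hyC (hsubD (Finset.mem_insert_self _ _))
            rw [Finset.sum_congr rfl step]
            have h0 := hcyc (τ.erase (v C hC))
            have hcompl : (τ.erase (v C hC))ᶜ = insert (v C hC) τᶜ := by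
              ext z
              simp only [Finset.mem_compl, Finset.mem_erase, Finset.mem_insert, not_and]
              by_cases hzw : z = v C hC <;> simp [hzw]
            rw [hcompl, Finset.sum_insert (by simp [hwτ]),
              Finset.insert_erase hwτ] at h0
            exact hflip _ _ h0
          · -- apex not in τ
            have step : ∀ y ∈ τᶜ,
                (if y ∈ C then (if v C hC ∈ insert y τ
                  then c ((insert y τ).erase (v C hC)) else 0) else 0) =
                if y = v C hC then c τ else 0 := by
              intro y hy
              by_cases hyw : y = v C hC
              · subst hyw
                rw [if_pos (hv C hC), if_pos (Finset.mem_insert_self _ _),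
                  Finset.erase_insert hwτ, if_pos rfl]
              · rw [if_neg hyw]
                by_cases hyC : y ∈ C
                · rw [if_pos hyC, if_neg]
                  simp only [Finset.mem_insert]
                  rintro (h | h)
                  · exact hyw h.symm
                  · exact hwτ h
                · rw [if_neg hyC]
            rw [Finset.sum_congr rfl step, Finset.sum_ite_eq' τᶜ (v C hC) (fun _ => c τ),
              if_pos (by simpa using hwτ)]
        · -- wrong cardinality
          have hcτ : c τ = 0 := by
            by_contra h
            exact hcard (csupp τ h).1
          rw [hcτ]
          refine Finset.sum_eq_zero fun y hy => Finset.sum_eq_zero fun x hx => ?_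
          split
          · by_contra h
            have h1 := (csupp _ h).1
            have he := Finset.card_erase_of_mem hx
            have hpos : 0 < (insert y τ).card := Finset.card_pos.mpr ⟨x, hx⟩
            have hyτ : y ∉ τ := by simpa using hy
            rw [Finset.card_insert_of_notMem hyτ] at he hpos
            omega
          · rfl
      · -- τ not contained in a part
        have hcτ : c τ = 0 := by
          by_contra h
          exact hgood (csupp τ h).2
        rw [hcτ]
        refine Finset.sum_eq_zero fun y hy => Finset.sum_eq_zero fun x hx => ?_
        rw [if_neg]
        rintro ⟨C, hC, hsub, -⟩
        exact hgood ⟨C, hC, (Finset.subset_insert y τ).trans hsub⟩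
  · -- no scale: c = 0
    refine ⟨0, ?_, ?_⟩
    · intro σ hσ
      exact absurd rfl hσ
    · funext τ
      have hcτ : c τ = 0 := by
        by_contra h
        obtain ⟨⟨-, s, hs, -⟩, -⟩ := hc τ h
        exact hex ⟨s, hs⟩
      simp [mod2Boundary, hcτ]
end

section
/- In the standard geometric realization of an abstract simplicial complex K' on N vertices in ℝ^N (vertex v_k ↦ basis vector e_k), if σ and τ are simplices of K' with disjoint realizations |σ| ∩ |τ| = ∅, then the Euclidean distance d(|σ|, |τ|) ≥ 1/√(p+1), where p is the maximal dimension of a simplex of K'. Conversely if d(|σ|,|τ|) ≥ 1/√(p+1) > 0 then |σ| ∩ |τ| = ∅. -/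
open Finset

/-- The canonical geometric realization of a simplex `σ` on the vertex set `Fin N`:
the convex hull of the standard basis vectors indexed by `σ`, inside `ℝ^N`. -/
noncomputable def geomReal {N : ℕ} (σ : Finset (Fin N)) : Set (EuclideanSpace ℝ (Fin N)) :=
  convexHull ℝ ((fun k => EuclideanSpace.single k (1 : ℝ)) '' σ)

lemma geomReal_props {N : ℕ} (σ : Finset (Fin N)) {x : EuclideanSpace ℝ (Fin N)}
    (hx : x ∈ geomReal σ) :
    (∀ i, 0 ≤ x i) ∧ (∀ i ∉ σ, x i = 0) ∧ ∑ i ∈ σ, x i = 1 := by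
  set S : Set (EuclideanSpace ℝ (Fin N)) :=
    {y | (∀ i, 0 ≤ y i) ∧ (∀ i ∉ σ, y i = 0) ∧ ∑ i ∈ σ, y i = 1} with hS
  have hconv : Convex ℝ S := by
    intro u hu v hv a b ha hb hab
    refine ⟨fun i => ?_, fun i hi => ?_, ?_⟩
    · have : (a • u + b • v) i = a * u i + b * v i := rfl
      rw [this]
      exact add_nonneg (mul_nonneg ha (hu.1 i)) (mul_nonneg hb (hv.1 i))
    · have : (a • u + b • v) i = a * u i + b * v i := rfl
      rw [this, hu.2.1 i hi, hv.2.1 i hi]; ring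
    · have : ∀ i, (a • u + b • v) i = a * u i + b * v i := fun i => rfl
      simp only [this, Finset.sum_add_distrib, ← Finset.mul_sum, hu.2.2, hv.2.2]
      linarith
  have himg : (fun k => EuclideanSpace.single k (1 : ℝ)) '' σ ⊆ S := by
    rintro _ ⟨k, hk, rfl⟩
    refine ⟨fun i => ?_, fun i hi => ?_, ?_⟩
    · simp only [EuclideanSpace.single_apply]; split <;> norm_num
    · simp only [EuclideanSpace.single_apply]
      split
      · next h => exact absurd (h ▸ hk) hi
      · rfl
    · simp only [EuclideanSpace.single_apply]
      rw [Finset.sum_ite_eq' σ k (fun _ => (1:ℝ))]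
      simp only [Finset.mem_coe] at hk
      simp [hk]
  exact convexHull_min himg hconv hx

/-- In the standard geometric realization of an abstract simplicial complex `K'` on `N`
vertices with simplices of dimension at most `p`, two simplices have disjoint
realizations iff their realizations are at Euclidean distance at least `1/√(p+1)`. -/
theorem geomReal_disjoint_iff_dist_ge {N p : ℕ} (K' : Set (Finset (Fin N)))
    (hK : ∀ σ ∈ K', σ.Nonempty ∧ σ.card ≤ p + 1)
    (σ τ : Finset (Fin N)) (hσ : σ ∈ K') (hτ : τ ∈ K') :
    (geomReal σ ∩ geomReal τ = ∅ →
      ∀ a ∈ geomReal σ, ∀ b ∈ geomReal τ, 1 / Real.sqrt (p + 1) ≤ dist a b) ∧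
    ((0 : ℝ) < 1 / Real.sqrt (p + 1) →
      (∀ a ∈ geomReal σ, ∀ b ∈ geomReal τ, 1 / Real.sqrt (p + 1) ≤ dist a b) →
      geomReal σ ∩ geomReal τ = ∅) := by
  constructor
  · intro hdisj a ha b hb
    -- σ and τ are disjoint
    have hστ : ∀ i ∈ σ, i ∉ τ := by
      intro i hiσ hiτ
      have h1 : EuclideanSpace.single i (1:ℝ) ∈ geomReal σ :=
        subset_convexHull ℝ _ ⟨i, hiσ, rfl⟩
      have h2 : EuclideanSpace.single i (1:ℝ) ∈ geomReal τ :=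
        subset_convexHull ℝ _ ⟨i, hiτ, rfl⟩
      exact absurd (Set.mem_inter h1 h2) (hdisj ▸ Set.notMem_empty _)
    obtain ⟨ha1, ha2, ha3⟩ := geomReal_props σ ha
    obtain ⟨hb1, hb2, hb3⟩ := geomReal_props τ hb
    have hcard : (0:ℝ) < σ.card := by
      exact_mod_cast Finset.card_pos.mpr (hK σ hσ).1
    -- key estimate on dist squared
    have hsum : (1:ℝ) / (p+1) ≤ ∑ i, dist (a i) (b i) ^ 2 := by
      have h1 : ∑ i ∈ σ, a i ^ 2 ≤ ∑ i, dist (a i) (b i) ^ 2 := by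
        refine le_trans (le_of_eq ?_) (Finset.sum_le_sum_of_subset_of_nonneg
          (Finset.subset_univ σ) (fun i _ _ => sq_nonneg _))
        refine Finset.sum_congr rfl fun i hi => ?_
        rw [Real.dist_eq, hb2 i (hστ i hi), sub_zero, sq_abs]
      have h2 : (1:ℝ) ≤ σ.card * ∑ i ∈ σ, a i ^ 2 := by
        have := sq_sum_le_card_mul_sum_sq (s := σ) (f := fun i => a i)
        rw [ha3] at this; simpa using this
      have h3 : (1:ℝ) / σ.card ≤ ∑ i ∈ σ, a i ^ 2 := by
        rw [div_le_iff₀ hcard]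
        linarith [h2]
      have h4 : (1:ℝ) / (p+1) ≤ 1 / σ.card := by
        apply one_div_le_one_div_of_le hcard
        exact_mod_cast (hK σ hσ).2
      linarith
    rw [EuclideanSpace.dist_eq]
    have h5 : (1:ℝ)/Real.sqrt (p+1) = Real.sqrt (1/(p+1)) := by
      rw [one_div, ← Real.sqrt_inv, one_div]
    rw [h5]
    exact Real.sqrt_le_sqrt hsum
  · intro hpos hd
    by_contra h
    obtain ⟨x, hx1, hx2⟩ := Set.nonempty_iff_ne_empty.mpr h
    have := hd x hx1 x hx2
    rw [dist_self] at this
    linarith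
end
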